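/- arXiv:0801.3228 — 2 statements merged into one kernel-verified Lean document; each statement's English description precedes it below -/
import Mathlib

section
/- A two-qubit density matrix ρ (a 4×4 positive semidefinite complex matrix with trace 1) satisfying (U⊗U)ρ(U†⊗U†)=ρ for all 2×2 unitary matrices U is determined by a single real parameter: ρ = p·P_sym/3 + (1−p)·P_asym, where P_sym and P_asym are the projectors onto the symmetric (3-dimensional) and antisymmetric (1-dimensional) subspaces of ℂ²⊗ℂ², and p ∈ [0,1]. -/
/-!
Invariance is only tested on three unitaries. Conjugation by `S ⊗ S` with the phase gate
`S = diag(1, i)` multiplies the entry `ρ_{pq}` by `i ^ (|p| - |q|)`, where `|p|` counts the ones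
in `p`, so `ρ` is block diagonal for the Hamming weight; the bit flip `X ⊗ X` then pairs up the
remaining entries. Hence `ρ = α Psym + β Pasym + γ Peq`, with `Peq` the projector onto
`span {|00⟩, |11⟩}`. Since SWAP commutes with every `U ⊗ U`, so do `Psym` and `Pasym`, while
`Peq` is moved by a rotation, which forces `γ = 0`. Finally `tr Psym = 3`, `tr Pasym = 1`, and
`α = ⟨00|ρ|00⟩`, `2β = ⟨ψ|ρ|ψ⟩` for `ψ = |01⟩ - |10⟩` are nonnegative.
-/

open Matrix
open scoped Kronecker ComplexOrder

/-- The SWAP operator on ℂ² ⊗ ℂ², as a matrix indexed by `Fin 2 × Fin 2`. -/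
def swapMat : Matrix (Fin 2 × Fin 2) (Fin 2 × Fin 2) ℂ :=
  fun p q => if p.1 = q.2 ∧ p.2 = q.1 then 1 else 0

/-- Projector onto the symmetric subspace of ℂ² ⊗ ℂ². -/
noncomputable def Psym : Matrix (Fin 2 × Fin 2) (Fin 2 × Fin 2) ℂ :=
  (1 / 2 : ℂ) • (1 + swapMat)

/-- Projector onto the antisymmetric subspace of ℂ² ⊗ ℂ². -/
noncomputable def Pasym : Matrix (Fin 2 × Fin 2) (Fin 2 × Fin 2) ℂ :=
  (1 / 2 : ℂ) • (1 - swapMat)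

lemma mul_mul_star_eq_of_commute {A : Type*} [Monoid A] [StarMul A] {W M : A}
    (hW : W ∈ unitary A) (h : Commute W M) : W * M * star W = M := by
  rw [h.eq, mul_assoc, Unitary.mul_star_self_of_mem hW, mul_one]

lemma diagonal_mul_mul_conjTranspose_apply {ι R : Type*} [Fintype ι] [DecidableEq ι]
    [CommRing R] [StarRing R] (d : ι → R) (M : Matrix ι ι R) (i j : ι) :
    (diagonal d * M * (diagonal d)ᴴ) i j = d i * M i j * star (d j) := by
  simp [diagonal_conjTranspose, mul_diagonal, diagonal_mul]

lemma apply_eq_zero_of_diagonal_conj_eq {ι R : Type*} [Fintype ι] [DecidableEq ι]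
    [CommRing R] [IsDomain R] [StarRing R] {d : ι → R} {M : Matrix ι ι R}
    (h : diagonal d * M * (diagonal d)ᴴ = M) {i j : ι} (hij : d i * star (d j) ≠ 1) :
    M i j = 0 := by
  have hij' := congrFun (congrFun h i) j
  rw [diagonal_mul_mul_conjTranspose_apply] at hij'
  have hfactor : M i j * (d i * star (d j) - 1) = 0 := by linear_combination hij'
  exact (mul_eq_zero.1 hfactor).resolve_right (sub_ne_zero.2 hij)

lemma swapMat_mul_kronecker (A B : Matrix (Fin 2) (Fin 2) ℂ) :
    swapMat * (A ⊗ₖ B) = (B ⊗ₖ A) * swapMat := by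
  ext ⟨i, j⟩ ⟨k, l⟩
  simp [swapMat, mul_apply, Fintype.sum_prod_type, ite_and, mul_comm]

lemma kronecker_self_conj_Psym {U : Matrix (Fin 2) (Fin 2) ℂ}
    (hU : U ∈ unitaryGroup (Fin 2) ℂ) : (U ⊗ₖ U) * Psym * (U ⊗ₖ U)ᴴ = Psym :=
  mul_mul_star_eq_of_commute (kronecker_mem_unitary hU hU)
    (((Commute.one_right _).add_right (swapMat_mul_kronecker U U).symm).smul_right _)

lemma kronecker_self_conj_Pasym {U : Matrix (Fin 2) (Fin 2) ℂ}
    (hU : U ∈ unitaryGroup (Fin 2) ℂ) : (U ⊗ₖ U) * Pasym * (U ⊗ₖ U)ᴴ = Pasym :=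
  mul_mul_star_eq_of_commute (kronecker_mem_unitary hU hU)
    (((Commute.one_right _).sub_right (swapMat_mul_kronecker U U).symm).smul_right _)

lemma trace_Psym : Psym.trace = 3 := by
  norm_num [Psym, swapMat, trace, Fintype.sum_prod_type]

lemma trace_Pasym : Pasym.trace = 1 := by
  norm_num [Pasym, swapMat, trace, Fintype.sum_prod_type]

def Peq : Matrix (Fin 2 × Fin 2) (Fin 2 × Fin 2) ℂ :=
  diagonal fun p => if p.1 = p.2 then 1 else 0

def phaseGate : Matrix (Fin 2) (Fin 2) ℂ := diagonal ![1, Complex.I]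

def flipGate : Matrix (Fin 2) (Fin 2) ℂ := !![0, 1; 1, 0]

-- A real rotation with rational entries, from the Pythagorean triple (3, 4, 5).
noncomputable def rotationGate : Matrix (Fin 2) (Fin 2) ℂ := !![3 / 5, 4 / 5; -4 / 5, 3 / 5]

lemma phaseGate_mem_unitaryGroup : phaseGate ∈ unitaryGroup (Fin 2) ℂ := by
  rw [mem_unitaryGroup_iff]
  ext i j
  fin_cases i <;> fin_cases j <;> simp [phaseGate]

lemma flipGate_mem_unitaryGroup : flipGate ∈ unitaryGroup (Fin 2) ℂ := by
  rw [mem_unitaryGroup_iff]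
  ext i j
  fin_cases i <;> fin_cases j <;> simp [flipGate, mul_apply]

lemma rotationGate_mem_unitaryGroup : rotationGate ∈ unitaryGroup (Fin 2) ℂ := by
  rw [mem_unitaryGroup_iff]
  ext i j
  fin_cases i <;> fin_cases j <;> norm_num [rotationGate, mul_apply, map_div₀, map_ofNat]

lemma apply_eq_zero_of_phaseGate_conj_eq {M : Matrix (Fin 2 × Fin 2) (Fin 2 × Fin 2) ℂ}
    (h : (phaseGate ⊗ₖ phaseGate) * M * (phaseGate ⊗ₖ phaseGate)ᴴ = M) {p q : Fin 2 × Fin 2}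
    (hpq : (p.1 : ℕ) + p.2 ≠ q.1 + q.2) : M p q = 0 := by
  rw [phaseGate, diagonal_kronecker_diagonal] at h
  refine apply_eq_zero_of_diagonal_conj_eq h ?_
  revert hpq
  fin_cases p <;> fin_cases q <;> norm_num [Complex.ext_iff]

lemma flipGate_conj_apply (M : Matrix (Fin 2 × Fin 2) (Fin 2 × Fin 2) ℂ) (p q : Fin 2 × Fin 2) :
    ((flipGate ⊗ₖ flipGate) * M * (flipGate ⊗ₖ flipGate)ᴴ) p q =
      M (p.1.rev, p.2.rev) (q.1.rev, q.2.rev) := by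
  fin_cases p <;> fin_cases q <;> simp [flipGate, mul_apply, Fintype.sum_prod_type]

lemma rotationGate_conj_Peq_ne :
    (rotationGate ⊗ₖ rotationGate) * Peq * (rotationGate ⊗ₖ rotationGate)ᴴ ≠ Peq := by
  intro h
  have h₀₁ := congrFun (congrFun h (0, 0)) (0, 1)
  norm_num [rotationGate, Peq, mul_apply, Fintype.sum_prod_type, map_div₀, map_ofNat] at h₀₁

lemma eq_smul_Psym_add_smul_Pasym_add_smul_Peq {ρ : Matrix (Fin 2 × Fin 2) (Fin 2 × Fin 2) ℂ}
    (hS : (phaseGate ⊗ₖ phaseGate) * ρ * (phaseGate ⊗ₖ phaseGate)ᴴ = ρ)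
    (hX : (flipGate ⊗ₖ flipGate) * ρ * (flipGate ⊗ₖ flipGate)ᴴ = ρ) :
    ρ = (ρ (0, 1) (0, 1) + ρ (0, 1) (1, 0)) • Psym + (ρ (0, 1) (0, 1) - ρ (0, 1) (1, 0)) • Pasym
      + (ρ (0, 0) (0, 0) - ρ (0, 1) (0, 1) - ρ (0, 1) (1, 0)) • Peq := by
  have hflip : ∀ p q, ρ (p.1.rev, p.2.rev) (q.1.rev, q.2.rev) = ρ p q := fun p q => by
    rw [← flipGate_conj_apply ρ, hX]
  have h11 := hflip (0, 0) (0, 0)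
  have h10 := hflip (0, 1) (0, 1)
  have h1001 := hflip (0, 1) (1, 0)
  simp only [Fin.rev_zero, Fin.reduceRev, Fin.reduceLast] at h11 h10 h1001
  ext p q
  fin_cases p <;> fin_cases q <;> simp [Psym, Pasym, Peq, swapMat] <;> first
    | exact apply_eq_zero_of_phaseGate_conj_eq hS (by decide)
    | ring1
    | linear_combination h11
    | linear_combination h10
    | linear_combination h1001

lemma exists_eq_smul_Psym_add_smul_Pasym {ρ : Matrix (Fin 2 × Fin 2) (Fin 2 × Fin 2) ℂ}
    (hinv : ∀ U ∈ unitaryGroup (Fin 2) ℂ, (U ⊗ₖ U) * ρ * (U ⊗ₖ U)ᴴ = ρ) :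
    ∃ α β : ℂ, ρ = α • Psym + β • Pasym := by
  obtain ⟨α, β, γ, hρ⟩ : ∃ α β γ : ℂ, ρ = α • Psym + β • Pasym + γ • Peq :=
    ⟨_, _, _, eq_smul_Psym_add_smul_Pasym_add_smul_Peq (hinv _ phaseGate_mem_unitaryGroup)
      (hinv _ flipGate_mem_unitaryGroup)⟩
  have hR := hinv _ rotationGate_mem_unitaryGroup
  rw [hρ] at hR
  simp only [Matrix.mul_add, Matrix.add_mul, Matrix.mul_smul, Matrix.smul_mul,
    kronecker_self_conj_Psym rotationGate_mem_unitaryGroup,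
    kronecker_self_conj_Pasym rotationGate_mem_unitaryGroup, add_right_inj] at hR
  have hγ : γ = 0 := by
    have hγR : γ • ((rotationGate ⊗ₖ rotationGate) * Peq * (rotationGate ⊗ₖ rotationGate)ᴴ
        - Peq) = 0 := by
      rw [smul_sub, hR, sub_self]
    exact (smul_eq_zero.1 hγR).resolve_right (sub_ne_zero.2 rotationGate_conj_Peq_ne)
  exact ⟨α, β, by rw [hρ, hγ, zero_smul, add_zero]⟩

def singlet : Fin 2 × Fin 2 → ℂ := Pi.single (0, 1) 1 - Pi.single (1, 0) 1

lemma Psym_mulVec_singlet : Psym *ᵥ singlet = 0 := by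
  ext ⟨i, j⟩
  fin_cases i <;> fin_cases j <;>
    simp [Psym, singlet, swapMat, mulVec, dotProduct, Fintype.sum_prod_type]

lemma Pasym_mulVec_singlet : Pasym *ᵥ singlet = singlet := by
  ext ⟨i, j⟩
  fin_cases i <;> fin_cases j <;>
    norm_num [Pasym, singlet, swapMat, mulVec, dotProduct, Fintype.sum_prod_type]

lemma star_singlet_dotProduct_singlet : star singlet ⬝ᵥ singlet = 2 := by
  norm_num [singlet, dotProduct, Fintype.sum_prod_type, Pi.single_apply]

lemma nonneg_of_posSemidef_smul_Psym_add_smul_Pasym {α β : ℂ}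
    (h : (α • Psym + β • Pasym).PosSemidef) : 0 ≤ α ∧ 0 ≤ β := by
  constructor
  · convert h.diag_nonneg (i := (0, 0)) using 1
    norm_num [Psym, Pasym, swapMat, ← mul_add]
  · have h2β := h.dotProduct_mulVec_nonneg singlet
    rw [add_mulVec, smul_mulVec, smul_mulVec, Psym_mulVec_singlet, Pasym_mulVec_singlet,
      smul_zero, zero_add, dotProduct_smul, star_singlet_dotProduct_singlet, smul_eq_mul] at h2β
    simpa using mul_nonneg h2β (by positivity : (0 : ℂ) ≤ 2⁻¹)

lemma exists_werner_parameter {α β : ℂ} (hα : 0 ≤ α) (hβ : 0 ≤ β) (h : 3 * α + β = 1) :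
    ∃ p : ℝ, 0 ≤ p ∧ p ≤ 1 ∧ α = (p : ℂ) / 3 ∧ β = ((1 - p : ℝ) : ℂ) := by
  obtain ⟨a, rfl⟩ : ∃ a : ℝ, α = a := ⟨_, Complex.eq_re_of_ofReal_le hα⟩
  obtain ⟨b, rfl⟩ : ∃ b : ℝ, β = b := ⟨_, Complex.eq_re_of_ofReal_le hβ⟩
  rw [Complex.zero_le_real] at hα hβ
  have h' : 3 * a + b = 1 := by exact_mod_cast h
  refine ⟨3 * a, by linarith, by linarith, by push_cast; ring, ?_⟩
  congr 1
  linarith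

/-- A two-qubit density matrix invariant under all `U ⊗ U` conjugations is a Werner
state: `ρ = p • Psym/3 + (1-p) • Pasym` for a single parameter `p ∈ [0,1]`. -/
theorem werner_states (ρ : Matrix (Fin 2 × Fin 2) (Fin 2 × Fin 2) ℂ)
    (hpsd : ρ.PosSemidef) (htr : ρ.trace = 1)
    (hinv : ∀ U ∈ Matrix.unitaryGroup (Fin 2) ℂ, (U ⊗ₖ U) * ρ * (U ⊗ₖ U)ᴴ = ρ) :
    ∃ p : ℝ, 0 ≤ p ∧ p ≤ 1 ∧
      ρ = ((p : ℂ) / 3) • Psym + ((1 - p : ℝ) : ℂ) • Pasym := by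
  obtain ⟨α, β, rfl⟩ := exists_eq_smul_Psym_add_smul_Pasym hinv
  obtain ⟨hα, hβ⟩ := nonneg_of_posSemidef_smul_Psym_add_smul_Pasym hpsd
  have htr' : 3 * α + β = 1 := by
    simpa [trace_add, trace_smul, trace_Psym, trace_Pasym, mul_comm] using htr
  obtain ⟨p, hp0, hp1, rfl, rfl⟩ := exists_werner_parameter hα hβ htr'
  exact ⟨p, hp0, hp1, rfl⟩
end

section
/- (Projection Lemma, specialized) With the hypotheses of the projection lemma, if J = 8‖H₁‖² + 2‖H₁‖ and ‖H₁‖ ≥ 1, then λ(H₁|_𝒮) − 1/8 ≤ λ(H₁+H₂). -/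
/-- The smallest eigenvalue of an operator on a complex inner product space:
the infimum of the real points of its spectrum. -/
noncomputable def minEig {E : Type*} [NormedAddCommGroup E] [InnerProductSpace ℂ E]
    (A : E →L[ℂ] E) : ℝ :=
  sInf {t : ℝ | (t : ℂ) ∈ spectrum ℂ A}

/-- The compression `P_𝒮 H₁ P_𝒮` of an operator to a subspace `𝒮`, as an operator on `𝒮`. -/
noncomputable def compress {E : Type*} [NormedAddCommGroup E] [InnerProductSpace ℂ E]
    (S : Submodule ℂ E) [S.HasOrthogonalProjection] (A : E →L[ℂ] E) : S →L[ℂ] S :=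
  (S.orthogonalProjectionOnto) ∘L A ∘L S.subtypeL

/-!
Split `v = x + w` with `x ∈ 𝒮 = ker H₂` and `w ⊥ 𝒮`. The compression bounds `⟪H₁ x, x⟫` below
by `λ‖x‖²`, the spectral gap bounds `⟪H₂ w, w⟫` below by `J‖w‖²`, and the three remaining terms
of `⟪H₁ v, v⟫` are at least `-‖H₁‖` times the corresponding norms. Since `λ ≤ ‖H₁‖`, what is
left is `(λ - 1/8)‖v‖²` plus `(‖x‖ - 8‖H₁‖‖w‖)² / 8 ≥ 0`; this square is where
`J = 8‖H₁‖² + 2‖H₁‖` comes from. Bounds on quadratic forms become bounds on `minEig` through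
the Loewner order: for self-adjoint `A` on a nonzero space, `c ≤ minEig A` iff `c • 1 ≤ A`.
-/

open scoped InnerProductSpace
open Module RCLike ContinuousLinearMap

section minEig

variable {E : Type*} [NormedAddCommGroup E] [InnerProductSpace ℂ E] {A : E →L[ℂ] E}

lemma minEig_eq_sInf_spectrum (A : E →L[ℂ] E) : minEig A = sInf (spectrum ℝ A) := by
  rw [minEig, ← spectrum.preimage_algebraMap ℂ]
  rfl

lemma minEig_eq_zero_of_subsingleton [Subsingleton E] (A : E →L[ℂ] E) : minEig A = 0 := by
  rw [minEig_eq_sInf_spectrum, spectrum.of_subsingleton, Real.sInf_empty]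

lemma re_inner_sub_algebraMap_apply (A : E →L[ℂ] E) (c : ℝ) (x : E) :
    re ⟪(A - algebraMap ℝ (E →L[ℂ] E) c) x, x⟫_ℂ = re ⟪A x, x⟫_ℂ - c * ‖x‖ ^ 2 := by
  simp [Algebra.algebraMap_eq_smul_one, ← Complex.ofReal_pow]

variable [CompleteSpace E]

lemma minEig_le_norm (A : E →L[ℂ] E) : minEig A ≤ ‖A‖ := by
  rcases subsingleton_or_nontrivial E with _ | _
  · simp [minEig_eq_zero_of_subsingleton]
  · have hle : ∀ t ∈ {t : ℝ | (t : ℂ) ∈ spectrum ℂ A}, |t| ≤ ‖A‖ := fun t ht => by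
      simpa using spectrum.norm_le_norm_of_mem ht
    calc minEig A ≤ sSup {t : ℝ | (t : ℂ) ∈ spectrum ℂ A} :=
          Real.sInf_le_sSup _ ⟨-‖A‖, fun t ht => neg_le_of_abs_le (hle t ht)⟩
            ⟨‖A‖, fun t ht => le_of_abs_le (hle t ht)⟩
      _ ≤ ‖A‖ := Real.sSup_le (fun t ht => le_of_abs_le (hle t ht)) (norm_nonneg A)

lemma IsSelfAdjoint.algebraMap_minEig_le (hA : IsSelfAdjoint A) :
    algebraMap ℝ (E →L[ℂ] E) (minEig A) ≤ A := by
  rw [algebraMap_le_iff_le_spectrum hA, minEig_eq_sInf_spectrum]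
  exact fun t ht => csInf_le (ContinuousFunctionalCalculus.isCompact_spectrum A).bddBelow ht

lemma IsSelfAdjoint.minEig_mul_norm_sq_le (hA : IsSelfAdjoint A) (x : E) :
    minEig A * ‖x‖ ^ 2 ≤ re ⟪A x, x⟫_ℂ := by
  have := hA.algebraMap_minEig_le.re_inner_nonneg_left x
  rw [re_inner_sub_algebraMap_apply] at this
  linarith

lemma IsSelfAdjoint.le_minEig [Nontrivial E] (hA : IsSelfAdjoint A) {c : ℝ}
    (h : ∀ x, c * ‖x‖ ^ 2 ≤ re ⟪A x, x⟫_ℂ) : c ≤ minEig A := by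
  have hc : algebraMap ℝ (E →L[ℂ] E) c ≤ A := by
    refine ⟨(hA.sub (.algebraMap _ (.all c))).isSymmetric, fun x => ?_⟩
    rw [reApplyInnerSelf_apply, re_inner_sub_algebraMap_apply]
    linarith [h x]
  rw [minEig_eq_sInf_spectrum]
  exact le_csInf (ContinuousFunctionalCalculus.spectrum_nonempty A hA)
    ((algebraMap_le_iff_le_spectrum hA).mp hc)

end minEig

section compress

variable {E : Type*} [NormedAddCommGroup E] [InnerProductSpace ℂ E] (S : Submodule ℂ E)
  [S.HasOrthogonalProjection] (A : E →L[ℂ] E)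

lemma inner_compress_apply (x y : S) : ⟪compress S A x, y⟫_ℂ = ⟪A x, y⟫_ℂ :=
  S.inner_orthogonalProjectionOnto_eq_of_mem_right y (A x)

lemma norm_compress_le : ‖compress S A‖ ≤ ‖A‖ :=
  calc ‖compress S A‖ ≤ ‖S.orthogonalProjectionOnto‖ * (‖A‖ * ‖S.subtypeL‖) :=
        (opNorm_comp_le _ _).trans (by gcongr; exact opNorm_comp_le _ _)
    _ ≤ 1 * (‖A‖ * 1) := by
        gcongr
        exacts [S.orthogonalProjectionOnto_norm_le, S.norm_subtypeL_le]
    _ = ‖A‖ := by ring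

variable {S A} in
lemma IsSelfAdjoint.compress [CompleteSpace E] [CompleteSpace S] (hA : IsSelfAdjoint A) :
    IsSelfAdjoint (compress S A) := by
  rw [_root_.compress, ← S.adjoint_subtypeL]
  exact hA.adjoint_conj _

end compress

theorem LinearMap.IsSymmetric.mul_norm_sq_le_re_inner_of_mem_orthogonal_ker
    {𝕜 E : Type*} [RCLike 𝕜] [NormedAddCommGroup E] [InnerProductSpace 𝕜 E]
    [FiniteDimensional 𝕜 E] {T : E →ₗ[𝕜] E} (hT : T.IsSymmetric) {J : ℝ}
    (hgap : ∀ μ : ℝ, End.HasEigenvalue T μ → μ ≠ 0 → J ≤ μ)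
    {w : E} (hw : w ∈ (LinearMap.ker T)ᗮ) :
    J * ‖w‖ ^ 2 ≤ re ⟪T w, w⟫_𝕜 := by
  set b := hT.eigenvectorBasis rfl
  set μ := hT.eigenvalues rfl
  have hexpand : ⟪T w, w⟫_𝕜 = ∑ i, (μ i : 𝕜) * (‖⟪b i, w⟫_𝕜‖ ^ 2 : ℝ) := by
    rw [← b.sum_inner_mul_inner]
    refine Finset.sum_congr rfl fun i _ => ?_
    rw [hT, hT.apply_eigenvectorBasis, inner_smul_right, mul_assoc, ← inner_conj_symm w,
      RCLike.conj_mul, ofReal_pow]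
  rw [← b.sum_sq_norm_inner_right, Finset.mul_sum, hexpand, map_sum]
  refine Finset.sum_le_sum fun i _ => ?_
  rw [← ofReal_mul, ofReal_re]
  by_cases hμ : μ i = 0
  · have hker : b i ∈ LinearMap.ker T := by
      simpa [LinearMap.mem_ker, b, hT.apply_eigenvectorBasis] using Or.inl hμ
    simp [Submodule.inner_right_of_mem_orthogonal hker hw]
  · exact mul_le_mul_of_nonneg_right (hgap _ (hT.hasEigenvalue_eigenvalues rfl i) hμ)
      (sq_nonneg _)

section ProjectionLemma

variable {𝕜 E : Type*} [RCLike 𝕜] [NormedAddCommGroup E] [InnerProductSpace 𝕜 E]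

lemma ContinuousLinearMap.neg_opNorm_mul_le_re_inner_apply (A : E →L[𝕜] E) (x y : E) :
    -(‖A‖ * ‖x‖ * ‖y‖) ≤ re ⟪A x, y⟫_𝕜 :=
  neg_le_of_abs_le <| calc
    |re ⟪A x, y⟫_𝕜| ≤ ‖A x‖ * ‖y‖ := (abs_re_le_norm _).trans (norm_inner_le_norm _ _)
    _ ≤ ‖A‖ * ‖x‖ * ‖y‖ := by gcongr; exact A.le_opNorm x

lemma sub_inv_eight_mul_sq_add_sq_le {K lam a b : ℝ} (hlam : lam ≤ K) :
    (lam - 1 / 8) * (a ^ 2 + b ^ 2) ≤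
      lam * a ^ 2 - 2 * K * a * b - K * b ^ 2 + (8 * K ^ 2 + 2 * K) * b ^ 2 := by
  nlinarith [sq_nonneg (a - 8 * K * b), mul_nonneg (sub_nonneg.2 hlam) (sq_nonneg b)]

theorem sub_inv_eight_mul_norm_sq_le_re_inner_add_apply {S : Submodule 𝕜 E}
    [S.HasOrthogonalProjection] {H₁ H₂ : E →L[𝕜] E} {lam : ℝ} (hH₂ : H₂.IsSymmetric)
    (hS : ∀ x ∈ S, H₂ x = 0)
    (hgap : ∀ w ∈ Sᗮ, (8 * ‖H₁‖ ^ 2 + 2 * ‖H₁‖) * ‖w‖ ^ 2 ≤ re ⟪H₂ w, w⟫_𝕜)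
    (hlam : lam ≤ ‖H₁‖) (hcompress : ∀ x ∈ S, lam * ‖x‖ ^ 2 ≤ re ⟪H₁ x, x⟫_𝕜) (v : E) :
    (lam - 1 / 8) * ‖v‖ ^ 2 ≤ re ⟪(H₁ + H₂) v, v⟫_𝕜 := by
  set x := S.starProjection v
  set w := v - x
  have hx : x ∈ S := S.starProjection_apply_mem v
  have hw : w ∈ Sᗮ := S.sub_starProjection_mem_orthogonal v
  have hv : v = x + w := (add_sub_cancel x v).symm
  have hpyth : ‖v‖ ^ 2 = ‖x‖ ^ 2 + ‖w‖ ^ 2 := by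
    simpa only [hv, sq] using norm_add_sq_eq_norm_sq_add_norm_sq_of_inner_eq_zero x w
      (Submodule.inner_right_of_mem_orthogonal hx hw)
  have hexpand : re ⟪(H₁ + H₂) v, v⟫_𝕜 = re ⟪H₁ x, x⟫_𝕜 + re ⟪H₁ x, w⟫_𝕜 + re ⟪H₁ w, x⟫_𝕜
      + re ⟪H₁ w, w⟫_𝕜 + re ⟪H₂ w, w⟫_𝕜 := by
    have hH₂wx : ⟪H₂ w, x⟫_𝕜 = 0 := by simpa [hS x hx] using hH₂ w x
    rw [hv]
    simp only [add_apply, map_add, hS x hx, inner_add_left, inner_add_right, hH₂wx,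
      inner_zero_left, map_zero]
    ring
  rw [hpyth, hexpand]
  calc (lam - 1 / 8) * (‖x‖ ^ 2 + ‖w‖ ^ 2)
      ≤ lam * ‖x‖ ^ 2 - 2 * ‖H₁‖ * ‖x‖ * ‖w‖ - ‖H₁‖ * ‖w‖ ^ 2
        + (8 * ‖H₁‖ ^ 2 + 2 * ‖H₁‖) * ‖w‖ ^ 2 := sub_inv_eight_mul_sq_add_sq_le hlam
    _ ≤ _ := by
      linarith [hcompress x hx, hgap w hw, H₁.neg_opNorm_mul_le_re_inner_apply x w,
        H₁.neg_opNorm_mul_le_re_inner_apply w x, H₁.neg_opNorm_mul_le_re_inner_apply w w]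

end ProjectionLemma

theorem projection_lemma_specialized_general {E : Type*} [NormedAddCommGroup E]
    [InnerProductSpace ℂ E] [FiniteDimensional ℂ E]
    (H₁ H₂ : E →L[ℂ] E)
    (hH₁ : IsSelfAdjoint H₁) (hH₂ : H₂.IsPositive)
    (hgap : ∀ t : ℝ, (t : ℂ) ∈ spectrum ℂ H₂ → t ≠ 0 → 8 * ‖H₁‖ ^ 2 + 2 * ‖H₁‖ ≤ t)
    (S : Submodule ℂ E) (hS : S = LinearMap.ker (H₂ : E →ₗ[ℂ] E)) :
    minEig (compress S H₁) - 1 / 8 ≤ minEig (H₁ + H₂) := by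
  rcases subsingleton_or_nontrivial E with _ | _
  · simp [minEig_eq_zero_of_subsingleton]
  have hgap' : ∀ w ∈ Sᗮ, (8 * ‖H₁‖ ^ 2 + 2 * ‖H₁‖) * ‖w‖ ^ 2 ≤ re ⟪H₂ w, w⟫_ℂ := by
    subst hS
    refine fun w hw => hH₂.isSymmetric.mul_norm_sq_le_re_inner_of_mem_orthogonal_ker
      (fun μ hμ hμ0 => hgap μ ?_ hμ0) hw
    rwa [spectrum_eq, ← End.hasEigenvalue_iff_mem_spectrum]
  refine (hH₁.add hH₂.isSelfAdjoint).le_minEig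
    (sub_inv_eight_mul_norm_sq_le_re_inner_add_apply hH₂.isSymmetric
      (fun x hx => by rwa [hS] at hx) hgap' ((minEig_le_norm _).trans (norm_compress_le S H₁))
      fun x hx => ?_)
  have := hH₁.compress.minEig_mul_norm_sq_le ⟨x, hx⟩
  rwa [inner_compress_apply] at this

/-- **Projection Lemma, specialized.** Under the hypotheses of the projection lemma,
with `J = 8‖H₁‖² + 2‖H₁‖` and `‖H₁‖ ≥ 1`, one has `λ(H₁|_𝒮) − 1/8 ≤ λ(H₁ + H₂)`. -/
theorem projection_lemma_specialized {E : Type*} [NormedAddCommGroup E]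
    [InnerProductSpace ℂ E] [FiniteDimensional ℂ E]
    (H₁ H₂ : E →L[ℂ] E)
    (hH₁ : IsSelfAdjoint H₁) (hH₂ : H₂.IsPositive)
    (hnorm : 1 ≤ ‖H₁‖)
    (hgap : ∀ t : ℝ, (t : ℂ) ∈ spectrum ℂ H₂ → t ≠ 0 → 8 * ‖H₁‖ ^ 2 + 2 * ‖H₁‖ ≤ t)
    (S : Submodule ℂ E) (hS : S = LinearMap.ker (H₂ : E →ₗ[ℂ] E)) :
    minEig (compress S H₁) - 1 / 8 ≤ minEig (H₁ + H₂) :=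
  projection_lemma_specialized_general H₁ H₂ hH₁ hH₂ hgap S hS
end
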